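/- arXiv:1905.10041 — 6 statements merged into one kernel-verified Lean document; each statement's English description precedes it below -/
import Mathlib

section
/- Let σ > 0 and C₁ = 8 / log(1 + σ⁻²). Suppose ‖φ(x)‖² ≤ 1 for all x ∈ X (i.e. k(x,x) ≤ 1), let f(x) = ⟨w, φ(x)⟩ for some w ∈ H, and let x* ∈ X satisfy f(x*) ≥ f(x) for all x ∈ X. Suppose points x₁, …, x_T ∈ X are chosen so that for every t ∈ {1,…,T} the Gram matrix K_{t−1} of x₁,…,x_{t−1} is invertible and x_t maximizes the acquisition function, i.e. m_{t−1}(x_t) + ‖w‖·σ_{t−1}(x_t) ≥ m_{t−1}(x) + ‖w‖·σ_{t−1}(x) for all x ∈ X. If γ ∈ ℝ satisfies (1/2)·log det(I_T + σ⁻² K_T) ≤ γ, where K_T is the Gram matrix of x₁,…,x_T, then the cumulative regret satisfies Σ_{t=1}^T (f(x*) − f(x_t)) ≤ ‖w‖·√(T·C₁·γ), and consequently the simple regret satisfies f(x*) − max_{1≤t≤T} f(x_t) ≤ ‖w‖·√(C₁·γ/T). -/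
open scoped RealInnerProductSpace
open Matrix

noncomputable section

variable {X : Type*} {H : Type*} [NormedAddCommGroup H] [InnerProductSpace ℝ H]

/-- The kernel associated with the feature map `φ`: `k(x,y) = ⟪φ(x), φ(y)⟫`. -/
def ker (φ : X → H) (x y : X) : ℝ := ⟪φ x, φ y⟫

/-- Gram matrix of the points `xs`. -/
def gram (φ : X → H) {t : ℕ} (xs : Fin t → X) : Matrix (Fin t) (Fin t) ℝ :=
  Matrix.of fun i j => ker φ (xs i) (xs j)

/-- The vector `k_t(a) = (k(a,x₁),…,k(a,x_t))ᵀ`. -/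
def kvec (φ : X → H) {t : ℕ} (xs : Fin t → X) (a : X) : Fin t → ℝ :=
  fun i => ker φ a (xs i)

/-- The mean prediction `m_t(a) = k_t(a)ᵀ K_t⁻¹ (f(x₁),…,f(x_t))ᵀ`. -/
def meanFn (φ : X → H) (f : X → ℝ) {t : ℕ} (xs : Fin t → X) (a : X) : ℝ :=
  kvec φ xs a ⬝ᵥ ((gram φ xs)⁻¹ *ᵥ (fun i => f (xs i)))

/-- The variance `σ_t²(a) = k(a,a) − k_t(a)ᵀ K_t⁻¹ k_t(a)`. -/
def varFn (φ : X → H) {t : ℕ} (xs : Fin t → X) (a : X) : ℝ :=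
  ker φ a a - kvec φ xs a ⬝ᵥ ((gram φ xs)⁻¹ *ᵥ kvec φ xs a)

/-- `σ_t(a) = √(σ_t²(a))`. -/
def sigmaFn (φ : X → H) {t : ℕ} (xs : Fin t → X) (a : X) : ℝ := Real.sqrt (varFn φ xs a)

/-- The first `t` points of the sequence `x`: `x₁,…,x_{t-1}` (0-indexed: indices `< t`). -/
def prevPts {T : ℕ} (x : Fin T → X) (t : Fin T) : Fin t.val → X :=
  fun j => x ⟨j.val, j.isLt.trans t.isLt⟩

/-!
Since `f = ⟪w, φ ·⟫`, the error `f a - m_t(a)` is `⟪w, r⟫` for the residual `r` of `φ a` after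
projection onto the span of `φ x₁, …, φ x_t`, and `σ_t(a) = ‖r‖`; hence `|f - m_t| ≤ ‖w‖ σ_t`, and
the acquisition rule bounds every instantaneous regret by `2 ‖w‖ σ_{t-1}(x_t)`.

Taking Schur complements, `det (I + σ⁻² K_T)` is the product of the factors
`1 + σ⁻² s²_{t-1}(x_t)`, where `s²` is the posterior variance under observation noise `σ²`, which
dominates the noise-free `σ²`. As `σ²_{t-1}(x_t) ∈ [0, 1]`, concavity of `log` gives
`log (1 + σ⁻²) · ∑ σ²_{t-1}(x_t) ≤ log det (I + σ⁻² K_T) ≤ 2γ`, and Cauchy–Schwarz turns this into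
the bound on `∑ σ_{t-1}(x_t)`.
-/

open Finset

lemma det_succ_eq_det_mul_schur {R : Type*} [CommRing R] {n : ℕ}
    (M : Matrix (Fin (n + 1)) (Fin (n + 1)) R)
    (hA : IsUnit (M.submatrix Fin.castSucc Fin.castSucc).det) :
    M.det = (M.submatrix Fin.castSucc Fin.castSucc).det *
      (M (Fin.last n) (Fin.last n) -
        (fun j => M (Fin.last n) (Fin.castSucc j)) ⬝ᵥ
          ((M.submatrix Fin.castSucc Fin.castSucc)⁻¹ *ᵥ
            fun i => M (Fin.castSucc i) (Fin.last n))) := by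
  have := (M.submatrix Fin.castSucc Fin.castSucc).invertibleOfIsUnitDet hA
  have h11 : (M.submatrix finSumFinEquiv finSumFinEquiv).toBlocks₁₁ =
      M.submatrix Fin.castSucc Fin.castSucc := rfl
  rw [← det_submatrix_equiv_self finSumFinEquiv, ← fromBlocks_toBlocks (M.submatrix _ _), h11,
    det_fromBlocks₁₁, det_fin_one, invOf_eq_nonsing_inv]
  congr 2
  rw [dotProduct_mulVec]
  rfl

lemma mul_dotProduct_inv_one_add_smul_mulVec_le {n : Type*} [Fintype n] [DecidableEq n]
    {G : Matrix n n ℝ} (hG : G.PosSemidef) (hu : IsUnit G.det) {c : ℝ} (hc : 0 ≤ c)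
    (k : n → ℝ) : c * (k ⬝ᵥ ((1 + c • G)⁻¹ *ᵥ k)) ≤ k ⬝ᵥ (G⁻¹ *ᵥ k) := by
  have hN : IsUnit (1 + c • G).det :=
    (isUnit_iff_isUnit_det _).mp ((PosDef.one.add_posSemidef (hG.smul hc)).isUnit)
  set v := (1 + c • G)⁻¹ *ᵥ k
  have hk : k = v + c • (G *ᵥ v) := calc
    k = (1 + c • G) *ᵥ v := by rw [mulVec_mulVec, mul_nonsing_inv _ hN, one_mulVec]
    _ = v + c • (G *ᵥ v) := by rw [add_mulVec, one_mulVec, smul_mulVec]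
  have hGsymm : Gᵀ = G := by simpa using hG.isHermitian.eq
  have hGinv : G⁻¹ *ᵥ (G *ᵥ v) = v := by rw [mulVec_mulVec, nonsing_inv_mul _ hu, one_mulVec]
  have hsymm : (G *ᵥ v) ⬝ᵥ (G⁻¹ *ᵥ v) = v ⬝ᵥ v := by
    rw [dotProduct_mulVec, ← mulVec_transpose, transpose_nonsing_inv, hGsymm, hGinv]
  have hexpand : k ⬝ᵥ (G⁻¹ *ᵥ k) - c * (k ⬝ᵥ v) = v ⬝ᵥ (G⁻¹ *ᵥ v) + c * (v ⬝ᵥ v) := by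
    rw [hk]
    simp only [mulVec_add, mulVec_smul, hGinv, add_dotProduct, dotProduct_add, smul_dotProduct,
      dotProduct_smul, smul_eq_mul]
    rw [hsymm]
    ring
  have h1 : 0 ≤ v ⬝ᵥ (G⁻¹ *ᵥ v) := by simpa using hG.inv.dotProduct_mulVec_nonneg v
  have h2 : 0 ≤ v ⬝ᵥ v := by simpa using PosSemidef.one.dotProduct_mulVec_nonneg v
  nlinarith

lemma mul_log_one_add_le_log_one_add_mul {c s : ℝ} (hc : -1 < c) (hs₀ : 0 ≤ s) (hs₁ : s ≤ 1) :
    s * Real.log (1 + c) ≤ Real.log (1 + c * s) := by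
  have hpos : 0 < 1 + c := by linarith
  rw [← Real.log_rpow hpos, mul_comm c]
  exact Real.log_le_log (by positivity) (rpow_one_add_le_one_add_mul_self hc.le hs₀ hs₁)

lemma sum_sqrt_le_sqrt_card_mul_sum {ι : Type*} (s : Finset ι) {f : ι → ℝ} (hf : ∀ i, 0 ≤ f i) :
    ∑ i ∈ s, √(f i) ≤ √(#s * ∑ i ∈ s, f i) := by
  have := Real.sum_sqrt_mul_sqrt_le s hf (g := fun _ => 1) (fun _ => zero_le_one)
  simp only [Real.sqrt_one, mul_one, sum_const, nsmul_one] at this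
  rw [Real.sqrt_mul (Nat.cast_nonneg _), mul_comm]
  exact this

lemma sub_sup'_le_sum_div_card {ι : Type*} {s : Finset ι} (hs : s.Nonempty) (g : ι → ℝ) (a : ℝ) :
    a - s.sup' hs g ≤ (∑ i ∈ s, (a - g i)) / #s := by
  rw [le_div_iff₀ (by exact_mod_cast hs.card_pos), mul_comm, ← nsmul_eq_mul, ← sum_const]
  exact sum_le_sum fun i hi => sub_le_sub_left (le_sup' g hi) a

lemma gram_posSemidef (φ : X → H) {t : ℕ} (xs : Fin t → X) : (gram φ xs).PosSemidef :=
  posSemidef_gram ℝ (φ ∘ xs)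

/-- For invertible `gram φ xs`, the component of `φ a` orthogonal to all the `φ (xs i)`. -/
def residualFn (φ : X → H) {t : ℕ} (xs : Fin t → X) (a : X) : H :=
  φ a - ∑ i, ((gram φ xs)⁻¹ *ᵥ kvec φ xs a) i • φ (xs i)

section Posterior

variable {φ : X → H} {t : ℕ} {xs : Fin t → X}

lemma gram_transpose : (gram φ xs)ᵀ = gram φ xs := by
  simpa using (gram_posSemidef φ xs).isHermitian.eq

lemma gram_inv_transpose : ((gram φ xs)⁻¹)ᵀ = (gram φ xs)⁻¹ := by
  rw [transpose_nonsing_inv, gram_transpose]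

lemma varFn_eq_norm_residual_sq (hu : IsUnit (gram φ xs).det) (a : X) :
    varFn φ xs a = ‖residualFn φ xs a‖ ^ 2 := by
  set c := (gram φ xs)⁻¹ *ᵥ kvec φ xs a
  have hc : gram φ xs *ᵥ c = kvec φ xs a := by
    rw [mulVec_mulVec, mul_nonsing_inv _ hu, one_mulVec]
  have hcross : ⟪φ a, ∑ i, c i • φ (xs i)⟫ = kvec φ xs a ⬝ᵥ c := by
    simp [inner_sum, real_inner_smul_right, dotProduct, kvec, ker, mul_comm]
  have hproj : ‖∑ i, c i • φ (xs i)‖ ^ 2 = c ⬝ᵥ kvec φ xs a := by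
    rw [← real_inner_self_eq_norm_sq, ← hc]
    exact (star_dotProduct_gram_mulVec (𝕜 := ℝ) (φ ∘ xs) c c).symm
  rw [residualFn, norm_sub_sq_real, hcross, hproj, varFn, ker, real_inner_self_eq_norm_sq,
    dotProduct_comm c]
  ring

lemma varFn_nonneg (hu : IsUnit (gram φ xs).det) (a : X) : 0 ≤ varFn φ xs a := by
  rw [varFn_eq_norm_residual_sq hu]
  positivity

lemma varFn_le_ker (a : X) : varFn φ xs a ≤ ker φ a a :=
  sub_le_self _ <| by simpa using (gram_posSemidef φ xs).inv.dotProduct_mulVec_nonneg (kvec φ xs a)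

lemma sigmaFn_eq_norm_residual (hu : IsUnit (gram φ xs).det) (a : X) :
    sigmaFn φ xs a = ‖residualFn φ xs a‖ := by
  rw [sigmaFn, varFn_eq_norm_residual_sq hu, Real.sqrt_sq (norm_nonneg _)]

lemma sub_meanFn_eq_inner_residual {w : H} {f : X → ℝ} (hf : ∀ a, f a = ⟪w, φ a⟫) (a : X) :
    f a - meanFn φ f xs a = ⟪w, residualFn φ xs a⟫ := by
  have hmean : meanFn φ f xs a = ((gram φ xs)⁻¹ *ᵥ kvec φ xs a) ⬝ᵥ fun i => f (xs i) := by
    rw [meanFn, dotProduct_mulVec, ← mulVec_transpose, gram_inv_transpose]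
  rw [hmean, residualFn, inner_sub_right, inner_sum, hf]
  simp [real_inner_smul_right, dotProduct, hf, mul_comm]

lemma abs_sub_meanFn_le {w : H} {f : X → ℝ} (hf : ∀ a, f a = ⟪w, φ a⟫)
    (hu : IsUnit (gram φ xs).det) (a : X) :
    |f a - meanFn φ f xs a| ≤ ‖w‖ * sigmaFn φ xs a := by
  rw [sub_meanFn_eq_inner_residual hf, sigmaFn_eq_norm_residual hu]
  exact abs_real_inner_le_norm _ _

lemma sub_le_two_mul_sigmaFn_of_ucb_le {w : H} {f : X → ℝ} (hf : ∀ a, f a = ⟪w, φ a⟫)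
    (hu : IsUnit (gram φ xs).det) {a b : X}
    (hab : meanFn φ f xs a + ‖w‖ * sigmaFn φ xs a ≤ meanFn φ f xs b + ‖w‖ * sigmaFn φ xs b) :
    f a - f b ≤ 2 * (‖w‖ * sigmaFn φ xs b) := by
  have ha := (abs_le.mp (abs_sub_meanFn_le hf hu a)).2
  have hb := (abs_le.mp (abs_sub_meanFn_le hf hu b)).1
  linarith

/-- The posterior variance under observation noise of variance `c⁻¹`:
`k(a,a) - k_t(a)ᵀ (K_t + c⁻¹ I)⁻¹ k_t(a)`. -/
def noisyVarFn (φ : X → H) (c : ℝ) {t : ℕ} (xs : Fin t → X) (a : X) : ℝ :=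
  ker φ a a - c * (kvec φ xs a ⬝ᵥ ((1 + c • gram φ xs)⁻¹ *ᵥ kvec φ xs a))

lemma varFn_le_noisyVarFn {c : ℝ} (hc : 0 ≤ c) (hu : IsUnit (gram φ xs).det) (a : X) :
    varFn φ xs a ≤ noisyVarFn φ c xs a :=
  sub_le_sub_left (mul_dotProduct_inv_one_add_smul_mulVec_le (gram_posSemidef φ xs) hu hc _) _

end Posterior

section InformationGain

variable {φ : X → H} {c : ℝ}

lemma isUnit_det_one_add_smul_gram (hc : 0 ≤ c) {t : ℕ} (xs : Fin t → X) :
    IsUnit (1 + c • gram φ xs).det :=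
  (isUnit_iff_isUnit_det _).mp (PosDef.one.add_posSemidef ((gram_posSemidef φ xs).smul hc)).isUnit

lemma det_one_add_smul_gram_succ (hc : 0 ≤ c) {n : ℕ} (xs : Fin (n + 1) → X) :
    (1 + c • gram φ xs).det = (1 + c • gram φ (xs ∘ Fin.castSucc)).det *
      (1 + c * noisyVarFn φ c (xs ∘ Fin.castSucc) (xs (Fin.last n))) := by
  set ys := xs ∘ Fin.castSucc
  set a := xs (Fin.last n)
  have hsub : (1 + c • gram φ xs).submatrix Fin.castSucc Fin.castSucc = 1 + c • gram φ ys := by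
    ext i j
    simp [one_apply, _root_.gram, ys]
  have hrow : (fun j => (1 + c • gram φ xs) (Fin.last n) (Fin.castSucc j)) = c • kvec φ ys a := by
    ext j
    simp [one_apply, _root_.gram, kvec, ys, a, (Fin.castSucc_ne_last j).symm]
  have hcol : (fun i => (1 + c • gram φ xs) (Fin.castSucc i) (Fin.last n)) = c • kvec φ ys a := by
    ext i
    simp [one_apply, _root_.gram, kvec, ys, a, Fin.castSucc_ne_last, ker, real_inner_comm]
  rw [det_succ_eq_det_mul_schur _ (hsub ▸ isUnit_det_one_add_smul_gram hc ys), hsub, hrow, hcol,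
    mulVec_smul, dotProduct_smul, smul_dotProduct]
  congr 1
  simp only [noisyVarFn, Matrix.add_apply, Matrix.smul_apply, one_apply_eq, smul_eq_mul,
    _root_.gram, of_apply]
  ring

lemma det_one_add_smul_gram_eq_prod (hc : 0 ≤ c) {T : ℕ} (x : Fin T → X) :
    (1 + c • gram φ x).det = ∏ t, (1 + c * noisyVarFn φ c (prevPts x t) (x t)) := by
  induction T with
  | zero => simp
  | succ n ih =>
    rw [det_one_add_smul_gram_succ hc, ih, Fin.prod_univ_castSucc]
    rfl

lemma log_one_add_mul_sum_varFn_le_log_det (hc : 0 < c) {T : ℕ} {x : Fin T → X}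
    (hk : ∀ t, ker φ (x t) (x t) ≤ 1) (hinv : ∀ t, IsUnit (gram φ (prevPts x t)).det) :
    Real.log (1 + c) * ∑ t, varFn φ (prevPts x t) (x t) ≤ Real.log (1 + c • gram φ x).det := by
  have hvar t := varFn_le_noisyVarFn hc.le (hinv t) (x t)
  have hvar₀ t := varFn_nonneg (hinv t) (x t)
  have hpos t : 0 < 1 + c * noisyVarFn φ c (prevPts x t) (x t) := by
    nlinarith [hvar t, hvar₀ t]
  rw [det_one_add_smul_gram_eq_prod hc.le, Real.log_prod fun t _ => (hpos t).ne', mul_sum]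
  refine sum_le_sum fun t _ => ?_
  calc Real.log (1 + c) * varFn φ (prevPts x t) (x t)
      ≤ Real.log (1 + c * varFn φ (prevPts x t) (x t)) := by
        rw [mul_comm]
        exact mul_log_one_add_le_log_one_add_mul (by linarith) (hvar₀ t)
          ((varFn_le_ker _).trans (hk t))
    _ ≤ Real.log (1 + c * noisyVarFn φ c (prevPts x t) (x t)) := by
        gcongr
        · nlinarith [hvar₀ t]
        · exact hvar t

end InformationGain

theorem statement_0_general
    (φ : X → H) (w : H) (f : X → ℝ) (hf : ∀ a, f a = ⟪w, φ a⟫)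
    (hk : ∀ a : X, ker φ a a ≤ 1)
    (σ : ℝ) (hσ : 0 < σ)
    (T : ℕ) (hT : 0 < T)
    (xstar : X)
    (x : Fin T → X)
    (hinv : ∀ t : Fin T, IsUnit (gram φ (prevPts x t)).det)
    (hacq : ∀ t : Fin T, ∀ a : X,
      meanFn φ f (prevPts x t) a + ‖w‖ * sigmaFn φ (prevPts x t) a ≤
        meanFn φ f (prevPts x t) (x t) + ‖w‖ * sigmaFn φ (prevPts x t) (x t))
    (γ : ℝ)
    (hγ : (1/2) * Real.log ((1 + (σ^2)⁻¹ • gram φ x).det) ≤ γ) :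
    (∑ t : Fin T, (f xstar - f (x t))) ≤
        ‖w‖ * Real.sqrt ((T : ℝ) * (8 / Real.log (1 + (σ^2)⁻¹)) * γ) ∧
    f xstar - (Finset.univ.sup' (Finset.univ_nonempty_iff.mpr (Fin.pos_iff_nonempty.mp hT))
        fun t => f (x t)) ≤
      ‖w‖ * Real.sqrt ((8 / Real.log (1 + (σ^2)⁻¹)) * γ / (T : ℝ)) := by
  set L := Real.log (1 + (σ ^ 2)⁻¹)
  set S := ∑ t, varFn φ (prevPts x t) (x t)
  have hc : 0 < (σ ^ 2)⁻¹ := by positivity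
  have hL : 0 < L := Real.log_pos (by linarith)
  have hT' : (0 : ℝ) < T := by exact_mod_cast hT
  have hS : 0 ≤ S := sum_nonneg fun t _ => varFn_nonneg (hinv t) (x t)
  have hgain : L * S ≤ 2 * γ := by
    linarith [log_one_add_mul_sum_varFn_le_log_det hc (fun t => hk (x t)) hinv]
  have hcum : ∑ t, (f xstar - f (x t)) ≤ ‖w‖ * √(T * (8 / L) * γ) := calc
    ∑ t, (f xstar - f (x t)) ≤ ∑ t, 2 * (‖w‖ * sigmaFn φ (prevPts x t) (x t)) :=
      sum_le_sum fun t _ => sub_le_two_mul_sigmaFn_of_ucb_le hf (hinv t) (hacq t xstar)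
    _ = 2 * ‖w‖ * ∑ t, √(varFn φ (prevPts x t) (x t)) := by
      simp only [sigmaFn, mul_sum, mul_assoc]
    _ ≤ 2 * ‖w‖ * √(T * S) := by
      gcongr
      simpa using sum_sqrt_le_sqrt_card_mul_sum univ fun t => varFn_nonneg (hinv t) (x t)
    _ = ‖w‖ * √(2 ^ 2 * (T * S)) := by
      rw [Real.sqrt_mul' _ (by positivity : (0 : ℝ) ≤ T * S), Real.sqrt_sq zero_le_two]
      ring
    _ ≤ ‖w‖ * √(T * (8 / L) * γ) := by
      refine mul_le_mul_of_nonneg_left (Real.sqrt_le_sqrt ?_) (norm_nonneg w)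
      rw [mul_div_assoc', div_mul_eq_mul_div, le_div_iff₀ hL]
      nlinarith [mul_le_mul_of_nonneg_left hgain hT'.le]
  refine ⟨hcum, ?_⟩
  calc _ ≤ (∑ t, (f xstar - f (x t))) / T :=
        (sub_sup'_le_sum_div_card _ _ _).trans_eq (by rw [card_univ, Fintype.card_fin])
    _ ≤ ‖w‖ * √(T * (8 / L) * γ) / T := by gcongr
    _ = ‖w‖ * √(8 / L * γ / T) := by
      rw [show 8 / L * γ / T = T * (8 / L) * γ / T ^ 2 by field_simp,
        Real.sqrt_div' _ (by positivity), Real.sqrt_sq hT'.le, mul_div_assoc]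

/-- Theorem 1 (noise-free sequential regret bounds). -/
theorem statement_0 [Nonempty X]
    (φ : X → H) (w : H) (f : X → ℝ) (hf : ∀ a, f a = ⟪w, φ a⟫)
    (hk : ∀ a : X, ker φ a a ≤ 1)
    (σ : ℝ) (hσ : 0 < σ)
    (T : ℕ) (hT : 0 < T)
    (xstar : X) (hstar : ∀ a : X, f a ≤ f xstar)
    (x : Fin T → X)
    (hinv : ∀ t : Fin T, IsUnit (gram φ (prevPts x t)).det)
    (hacq : ∀ t : Fin T, ∀ a : X,
      meanFn φ f (prevPts x t) a + ‖w‖ * sigmaFn φ (prevPts x t) a ≤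
        meanFn φ f (prevPts x t) (x t) + ‖w‖ * sigmaFn φ (prevPts x t) (x t))
    (γ : ℝ)
    (hγ : (1/2) * Real.log ((1 + (σ^2)⁻¹ • gram φ x).det) ≤ γ) :
    (∑ t : Fin T, (f xstar - f (x t))) ≤
        ‖w‖ * Real.sqrt ((T : ℝ) * (8 / Real.log (1 + (σ^2)⁻¹)) * γ) ∧
    f xstar - (Finset.univ.sup' (Finset.univ_nonempty_iff.mpr (Fin.pos_iff_nonempty.mp hT))
        fun t => f (x t)) ≤
      ‖w‖ * Real.sqrt ((8 / Real.log (1 + (σ^2)⁻¹)) * γ / (T : ℝ)) :=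
  statement_0_general φ w f hf hk σ hσ T hT xstar x hinv hacq γ hγ
end
end

section
/- Let 𝒳 ⊆ ℝ^d, let Φ : [0,∞) → ℝ be nonincreasing with Φ(0) ≤ 1, and suppose the kernel is shift-invariant: ⟨φ(x), φ(y)⟩ = Φ(‖x − y‖) for all x, y ∈ 𝒳. Let x₁, …, x_T ∈ 𝒳 be points with covering radius h_X, i.e. for every x ∈ 𝒳 there exists t ∈ {1,…,T} with ‖x − x_t‖ ≤ h_X. Suppose for each t ∈ {1,…,T} the function f_t(x) = ⟨w_t, φ(x)⟩ satisfies ‖w_t‖ ≤ B, and there exists x* ∈ 𝒳 such that f_t(x*) ≥ f_t(x) for all x ∈ 𝒳 and all t. Then min_{1≤t≤T} (f_t(x*) − f_t(x_t)) ≤ B·√(2 − 2·Φ(h_X)). -/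
/-!
For a shift-invariant kernel the feature map satisfies
`‖φ a - φ b‖² = 2Φ(0) - 2Φ(‖a - b‖)`, so points at distance at most `h_X` have features at
distance at most `√(2 - 2Φ(h_X))`. Choosing `t` with `‖x* - x_t‖ ≤ h_X`, Cauchy–Schwarz bounds
`f_t(x*) - f_t(x_t) = ⟪w_t, φ x* - φ x_t⟫` by `B·√(2 - 2Φ(h_X))`, and the minimum over `t`
is no larger.
-/

open scoped RealInnerProductSpace

section ShiftInvariantKernel

variable {E H : Type*} [SeminormedAddCommGroup E] [NormedAddCommGroup H] [InnerProductSpace ℝ H]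
  {S : Set E} {φ : E → H} {Φ : ℝ → ℝ}

theorem norm_sub_sq_of_inner_eq_comp_norm_sub
    (hshift : ∀ x ∈ S, ∀ y ∈ S, ⟪φ x, φ y⟫ = Φ ‖x - y‖) {a b : E} (ha : a ∈ S) (hb : b ∈ S) :
    ‖φ a - φ b‖ ^ 2 = 2 * Φ 0 - 2 * Φ ‖a - b‖ := by
  rw [norm_sub_sq_real, ← real_inner_self_eq_norm_sq, ← real_inner_self_eq_norm_sq,
    hshift a ha a ha, hshift a ha b hb, hshift b hb b hb, sub_self, sub_self, norm_zero]
  ring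

theorem norm_sub_le_sqrt_of_inner_eq_comp_norm_sub
    (hshift : ∀ x ∈ S, ∀ y ∈ S, ⟪φ x, φ y⟫ = Φ ‖x - y‖)
    (hΦmono : AntitoneOn Φ (Set.Ici 0)) (hΦ0 : Φ 0 ≤ 1)
    {a b : E} (ha : a ∈ S) (hb : b ∈ S) {h : ℝ} (hab : ‖a - b‖ ≤ h) :
    ‖φ a - φ b‖ ≤ √(2 - 2 * Φ h) := by
  have hΦh : Φ h ≤ Φ ‖a - b‖ :=
    hΦmono (norm_nonneg _) ((norm_nonneg _).trans hab : (0 : ℝ) ≤ h) hab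
  apply Real.le_sqrt_of_sq_le
  rw [norm_sub_sq_of_inner_eq_comp_norm_sub hshift ha hb]
  linarith

end ShiftInvariantKernel

theorem statement_5_general
    {H : Type*} [NormedAddCommGroup H] [InnerProductSpace ℝ H]
    (d : ℕ) (S : Set (EuclideanSpace ℝ (Fin d)))
    (φ : EuclideanSpace ℝ (Fin d) → H)
    (Φ : ℝ → ℝ)
    (hΦmono : ∀ s t : ℝ, 0 ≤ s → s ≤ t → Φ t ≤ Φ s)
    (hΦ0 : Φ 0 ≤ 1)
    (hshift : ∀ x ∈ S, ∀ y ∈ S, (⟪φ x, φ y⟫ : ℝ) = Φ (‖x - y‖))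
    (B : ℝ) (T : ℕ) (hT : 0 < T)
    (x : Fin T → EuclideanSpace ℝ (Fin d)) (hxS : ∀ t : Fin T, x t ∈ S)
    (hX : ℝ) (hcover : ∀ a ∈ S, ∃ t : Fin T, ‖a - x t‖ ≤ hX)
    (w : Fin T → H) (hw : ∀ t : Fin T, ‖w t‖ ≤ B)
    (xstar : EuclideanSpace ℝ (Fin d)) (hstarS : xstar ∈ S) :
    (Finset.univ.inf' (Finset.univ_nonempty_iff.mpr (Fin.pos_iff_nonempty.mp hT))
        fun t => (⟪w t, φ xstar⟫ : ℝ) - ⟪w t, φ (x t)⟫) ≤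
      B * Real.sqrt (2 - 2 * Φ hX) := by
  obtain ⟨t, ht⟩ := hcover xstar hstarS
  have hfeature : ‖φ xstar - φ (x t)‖ ≤ √(2 - 2 * Φ hX) :=
    norm_sub_le_sqrt_of_inner_eq_comp_norm_sub hshift
      (fun s hs t _ hst => hΦmono s t hs hst) hΦ0 hstarS (hxS t) ht
  calc _ ≤ (⟪w t, φ xstar⟫ : ℝ) - ⟪w t, φ (x t)⟫ := Finset.inf'_le _ (Finset.mem_univ t)
    _ = ⟪w t, φ xstar - φ (x t)⟫ := (inner_sub_right _ _ _).symm
    _ ≤ ‖w t‖ * ‖φ xstar - φ (x t)‖ := real_inner_le_norm _ _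
    _ ≤ B * √(2 - 2 * Φ hX) :=
      mul_le_mul (hw t) hfeature (norm_nonneg _) ((norm_nonneg _).trans (hw t))

/-- Theorem 9 (fully adversarial regret bound for a shift-invariant kernel):
if the points `x₁,…,x_T` have covering radius `h_X` in `𝒳` and each `f_t` lies in the
RKHS ball of radius `B` with common maximizer `x*`, then
`min_t (f_t(x*) − f_t(x_t)) ≤ B·√(2 − 2Φ(h_X))`. -/
theorem statement_5
    {H : Type*} [NormedAddCommGroup H] [InnerProductSpace ℝ H]
    (d : ℕ) (S : Set (EuclideanSpace ℝ (Fin d)))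
    (φ : EuclideanSpace ℝ (Fin d) → H)
    (Φ : ℝ → ℝ)
    (hΦmono : ∀ s t : ℝ, 0 ≤ s → s ≤ t → Φ t ≤ Φ s)
    (hΦ0 : Φ 0 ≤ 1)
    (hshift : ∀ x ∈ S, ∀ y ∈ S, (⟪φ x, φ y⟫ : ℝ) = Φ (‖x - y‖))
    (B : ℝ) (T : ℕ) (hT : 0 < T)
    (x : Fin T → EuclideanSpace ℝ (Fin d)) (hxS : ∀ t : Fin T, x t ∈ S)
    (hX : ℝ) (hcover : ∀ a ∈ S, ∃ t : Fin T, ‖a - x t‖ ≤ hX)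
    (w : Fin T → H) (hw : ∀ t : Fin T, ‖w t‖ ≤ B)
    (xstar : EuclideanSpace ℝ (Fin d)) (hstarS : xstar ∈ S)
    (hstar : ∀ t : Fin T, ∀ a ∈ S, (⟪w t, φ a⟫ : ℝ) ≤ ⟪w t, φ xstar⟫) :
    (Finset.univ.inf' (Finset.univ_nonempty_iff.mpr (Fin.pos_iff_nonempty.mp hT))
        fun t => (⟪w t, φ xstar⟫ : ℝ) - ⟪w t, φ (x t)⟫) ≤
      B * Real.sqrt (2 - 2 * Φ hX) :=
  statement_5_general d S φ Φ hΦmono hΦ0 hshift B T hT x hxS hX hcover w hw xstar hstarS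
end

section
/- Let 𝒳 ⊆ ℝ^d, let C > 0, and suppose the kernel is the squared exponential kernel: ⟨φ(x), φ(y)⟩ = exp(−C·‖x − y‖²) for all x, y ∈ 𝒳. Let x₁, …, x_T ∈ 𝒳 be points such that for every x ∈ 𝒳 there exists t ∈ {1,…,T} with ‖x − x_t‖ ≤ h_X. Suppose for each t ∈ {1,…,T} the function f_t(x) = ⟨w_t, φ(x)⟩ satisfies ‖w_t‖ ≤ B, and there exists x* ∈ 𝒳 such that f_t(x*) ≥ f_t(x) for all x ∈ 𝒳 and all t. Then min_{1≤t≤T} (f_t(x*) − f_t(x_t)) ≤ B·√(2C)·h_X. -/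
open scoped RealInnerProductSpace

section SquaredExponentialFeatures

variable {E H : Type*} [SeminormedAddCommGroup E] [NormedAddCommGroup H] [InnerProductSpace ℝ H]
  {S : Set E} {φ : E → H} {C : ℝ} {x y : E}

theorem norm_sub_sq_of_inner_eq_exp
    (hSE : ∀ a ∈ S, ∀ b ∈ S, (⟪φ a, φ b⟫ : ℝ) = Real.exp (-C * ‖a - b‖ ^ 2))
    (hx : x ∈ S) (hy : y ∈ S) :
    ‖φ x - φ y‖ ^ 2 = 2 - 2 * Real.exp (-C * ‖x - y‖ ^ 2) := by
  rw [norm_sub_sq_real, ← real_inner_self_eq_norm_sq, ← real_inner_self_eq_norm_sq,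
    hSE x hx x hx, hSE y hy y hy, hSE x hx y hy]
  simp only [sub_self, norm_zero, ne_eq, two_ne_zero, not_false_eq_true, zero_pow, mul_zero,
    Real.exp_zero]
  ring

-- Combine the previous identity with `1 - u ≤ exp (-u)`.
theorem norm_sub_le_sqrt_mul_norm_sub_of_inner_eq_exp (hC : 0 ≤ C)
    (hSE : ∀ a ∈ S, ∀ b ∈ S, (⟪φ a, φ b⟫ : ℝ) = Real.exp (-C * ‖a - b‖ ^ 2))
    (hx : x ∈ S) (hy : y ∈ S) :
    ‖φ x - φ y‖ ≤ Real.sqrt (2 * C) * ‖x - y‖ := by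
  rw [← pow_le_pow_iff_left₀ (norm_nonneg _) (by positivity) two_ne_zero, mul_pow,
    Real.sq_sqrt (by positivity), norm_sub_sq_of_inner_eq_exp hSE hx hy]
  linarith [Real.add_one_le_exp (-C * ‖x - y‖ ^ 2)]

end SquaredExponentialFeatures

theorem statement_6_general
    {H : Type*} [NormedAddCommGroup H] [InnerProductSpace ℝ H]
    (d : ℕ) (S : Set (EuclideanSpace ℝ (Fin d)))
    (φ : EuclideanSpace ℝ (Fin d) → H)
    (C : ℝ) (hC : 0 < C)
    (hSE : ∀ x ∈ S, ∀ y ∈ S, (⟪φ x, φ y⟫ : ℝ) = Real.exp (-C * ‖x - y‖ ^ 2))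
    (B : ℝ) (T : ℕ) (hT : 0 < T)
    (x : Fin T → EuclideanSpace ℝ (Fin d)) (hxS : ∀ t : Fin T, x t ∈ S)
    (hX : ℝ) (hcover : ∀ a ∈ S, ∃ t : Fin T, ‖a - x t‖ ≤ hX)
    (w : Fin T → H) (hw : ∀ t : Fin T, ‖w t‖ ≤ B)
    (xstar : EuclideanSpace ℝ (Fin d)) (hstarS : xstar ∈ S) :
    (Finset.univ.inf' (Finset.univ_nonempty_iff.mpr (Fin.pos_iff_nonempty.mp hT))
        fun t => (⟪w t, φ xstar⟫ : ℝ) - ⟪w t, φ (x t)⟫) ≤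
      B * Real.sqrt (2 * C) * hX := by
  obtain ⟨t, ht⟩ := hcover xstar hstarS
  have hB : 0 ≤ B := (norm_nonneg _).trans (hw t)
  have hφ : ‖φ xstar - φ (x t)‖ ≤ Real.sqrt (2 * C) * hX :=
    (norm_sub_le_sqrt_mul_norm_sub_of_inner_eq_exp hC.le hSE hstarS (hxS t)).trans
      (by gcongr)
  calc _ ≤ (⟪w t, φ xstar⟫ : ℝ) - ⟪w t, φ (x t)⟫ := Finset.inf'_le _ (Finset.mem_univ t)
    _ = ⟪w t, φ xstar - φ (x t)⟫ := (inner_sub_right _ _ _).symm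
    _ ≤ ‖w t‖ * ‖φ xstar - φ (x t)‖ := real_inner_le_norm _ _
    _ ≤ B * (Real.sqrt (2 * C) * hX) := by gcongr; exact hw t
    _ = B * Real.sqrt (2 * C) * hX := (mul_assoc _ _ _).symm

/-- Corollary 2 (fully adversarial regret bound for the squared exponential kernel):
if the points `x₁,…,x_T` have covering radius `h_X` in `𝒳` and each `f_t` lies in the
RKHS ball of radius `B` with common maximizer `x*`, then
`min_t (f_t(x*) − f_t(x_t)) ≤ B·√(2C)·h_X`. -/
theorem statement_6
    {H : Type*} [NormedAddCommGroup H] [InnerProductSpace ℝ H]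
    (d : ℕ) (S : Set (EuclideanSpace ℝ (Fin d)))
    (φ : EuclideanSpace ℝ (Fin d) → H)
    (C : ℝ) (hC : 0 < C)
    (hSE : ∀ x ∈ S, ∀ y ∈ S, (⟪φ x, φ y⟫ : ℝ) = Real.exp (-C * ‖x - y‖ ^ 2))
    (B : ℝ) (T : ℕ) (hT : 0 < T)
    (x : Fin T → EuclideanSpace ℝ (Fin d)) (hxS : ∀ t : Fin T, x t ∈ S)
    (hX : ℝ) (hcover : ∀ a ∈ S, ∃ t : Fin T, ‖a - x t‖ ≤ hX)
    (w : Fin T → H) (hw : ∀ t : Fin T, ‖w t‖ ≤ B)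
    (xstar : EuclideanSpace ℝ (Fin d)) (hstarS : xstar ∈ S)
    (hstar : ∀ t : Fin T, ∀ a ∈ S, (⟪w t, φ a⟫ : ℝ) ≤ ⟪w t, φ xstar⟫) :
    (Finset.univ.inf' (Finset.univ_nonempty_iff.mpr (Fin.pos_iff_nonempty.mp hT))
        fun t => (⟪w t, φ xstar⟫ : ℝ) - ⟪w t, φ (x t)⟫) ≤
      B * Real.sqrt (2 * C) * hX :=
  statement_6_general d S φ C hC hSE B T hT x hxS hX hcover w hw xstar hstarS
end

section
/- Let f(x) = ⟨w, φ(x)⟩ for some w ∈ H, and let x₁, …, x_t ∈ X have invertible Gram matrix K_t. Then for every x ∈ X, (m_t(x) − f(x))² ≤ ‖w‖² · σ_t²(x). -/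
open scoped RealInnerProductSpace
open Matrix

noncomputable section

variable {X : Type*} {H : Type*} [NormedAddCommGroup H] [InnerProductSpace ℝ H]

/-
With `c = K_t⁻¹ k_t(x)`, the vector `r = ∑ᵢ cᵢ φ(xᵢ) - φ(x)` satisfies `m_t(x) - f(x) = ⟪w, r⟫`
(because `K_t⁻¹` is symmetric) and `σ_t²(x) = ‖r‖²` (because `K_t c = k_t(x)`), so the bound is
the Cauchy–Schwarz inequality `⟪w, r⟫² ≤ ‖w‖² ‖r‖²`.
-/

lemma gram_eq_matrix_gram (φ : X → H) {t : ℕ} (xs : Fin t → X) :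
    _root_.gram φ xs = Matrix.gram ℝ (φ ∘ xs) :=
  rfl

lemma inv_gram_mulVec_eq_vecMul (φ : X → H) {t : ℕ} (xs : Fin t → X) (v : Fin t → ℝ) :
    (_root_.gram φ xs)⁻¹ *ᵥ v = v ᵥ* (_root_.gram φ xs)⁻¹ := by
  have hsymm : ((Matrix.gram ℝ (φ ∘ xs))⁻¹).IsSymm := by
    simpa using (isHermitian_gram ℝ (φ ∘ xs)).inv
  rw [← mulVec_transpose, gram_eq_matrix_gram, hsymm.eq]

def interpResidual (φ : X → H) {t : ℕ} (xs : Fin t → X) (a : X) : H :=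
  ∑ i, ((_root_.gram φ xs)⁻¹ *ᵥ kvec φ xs a) i • φ (xs i) - φ a

lemma inner_sum_smul_feature (φ : X → H) {t : ℕ} (xs : Fin t → X) (c : Fin t → ℝ) (a : X) :
    ⟪∑ i, c i • φ (xs i), φ a⟫ = c ⬝ᵥ kvec φ xs a := by
  simp only [sum_inner, real_inner_smul_left]
  simp only [dotProduct, kvec, ker, real_inner_comm (φ a)]

lemma meanFn_sub_eq_inner_interpResidual (φ : X → H) (w : H) (f : X → ℝ)
    (hf : ∀ a, f a = ⟪w, φ a⟫) {t : ℕ} (xs : Fin t → X) (a : X) :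
    meanFn φ f xs a - f a = ⟪w, interpResidual φ xs a⟫ := by
  rw [meanFn, dotProduct_mulVec, ← inv_gram_mulVec_eq_vecMul]
  simp only [interpResidual, inner_sub_right, inner_sum, real_inner_smul_right, dotProduct, hf]

lemma varFn_eq_norm_interpResidual_sq (φ : X → H) {t : ℕ} (xs : Fin t → X)
    (hinv : IsUnit (_root_.gram φ xs).det) (a : X) :
    varFn φ xs a = ‖interpResidual φ xs a‖ ^ 2 := by
  set c := (_root_.gram φ xs)⁻¹ *ᵥ kvec φ xs a
  have hc : _root_.gram φ xs *ᵥ c = kvec φ xs a := by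
    rw [mulVec_mulVec, mul_nonsing_inv _ hinv, one_mulVec]
  have hnorm : ‖∑ i, c i • φ (xs i)‖ ^ 2 = c ⬝ᵥ kvec φ xs a := by
    calc ‖∑ i, c i • φ (xs i)‖ ^ 2 = star c ⬝ᵥ Matrix.gram ℝ (φ ∘ xs) *ᵥ c := by
          rw [star_dotProduct_gram_mulVec, real_inner_self_eq_norm_sq]; rfl
      _ = c ⬝ᵥ kvec φ xs a := by rw [star_trivial, ← gram_eq_matrix_gram, hc]
  rw [interpResidual, norm_sub_sq_real, hnorm, inner_sum_smul_feature,
    ← real_inner_self_eq_norm_sq, varFn, dotProduct_comm]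
  simp only [ker]
  ring

/-- Lemma 1: `(m_t(x) − f(x))² ≤ ‖w‖²·σ_t²(x)`. -/
theorem statement_7
    (φ : X → H) (w : H) (f : X → ℝ) (hf : ∀ a, f a = ⟪w, φ a⟫)
    (t : ℕ) (xs : Fin t → X) (hinv : IsUnit (gram φ xs).det)
    (a : X) :
    (meanFn φ f xs a - f a) ^ 2 ≤ ‖w‖ ^ 2 * varFn φ xs a := by
  rw [meanFn_sub_eq_inner_interpResidual φ w f hf xs a,
    varFn_eq_norm_interpResidual_sq φ xs hinv a, ← mul_pow, ← sq_abs]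
  gcongr
  exact abs_real_inner_le_norm _ _
end
end

section
/- Let A be an L×L real symmetric positive semidefinite matrix, let β > 0 satisfy ‖A‖₂ ≤ β (spectral norm, i.e. every eigenvalue of A is at most β), and let σ > 0. Then tr(A) ≤ (β / log(1 + β·σ⁻²)) · log det(I + σ⁻² A). -/
/-!
Diagonalize `A = U diag(λ) Uᴴ`. Then `tr A = ∑ λᵢ` and `log det (I + c A) = ∑ log (1 + c λᵢ)`
with `c = σ⁻²`, so it suffices to compare each eigenvalue separately. Since `x ↦ log (1 + c x)`
is concave and vanishes at `0`, it lies above its chord on `[0, β]`: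
`λ log (1 + c β) ≤ β log (1 + c λ)` for `0 ≤ λ ≤ β`.
-/

open Real Set

theorem ConcaveOn.mul_le_mul_of_map_zero_nonneg {𝕜 : Type*} [Field 𝕜] [LinearOrder 𝕜]
    [IsStrictOrderedRing 𝕜] {f : 𝕜 → 𝕜} {s : Set 𝕜} (hf : ConcaveOn 𝕜 s f) (h0 : 0 ∈ s)
    (hf0 : 0 ≤ f 0) {b x : 𝕜} (hb : b ∈ s) (hx : 0 ≤ x) (hxb : x ≤ b) :
    x * f b ≤ b * f x := by
  rcases hx.eq_or_lt with rfl | hx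
  · simpa using mul_nonneg (hx.trans hxb) hf0
  have hb0 : 0 < b := hx.trans_le hxb
  have ht : x / b ≤ 1 := (div_le_one hb0).2 hxb
  have hchord := hf.2 h0 hb (sub_nonneg.2 ht) (div_nonneg hx.le hb0.le) (sub_add_cancel 1 (x / b))
  simp only [smul_eq_mul, mul_zero, zero_add, div_mul_cancel₀ x hb0.ne'] at hchord
  calc x * f b = b * (x / b * f b) := by field_simp
    _ ≤ b * f x := by gcongr; linarith [mul_nonneg (sub_nonneg.2 ht) hf0]

theorem concaveOn_log_one_add_mul {c : ℝ} (hc : 0 ≤ c) :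
    ConcaveOn ℝ (Ici 0) fun x ↦ log (1 + c * x) := by
  refine ((strictConcaveOn_log_Ioi.concaveOn.comp_affineMap
    (AffineMap.lineMap 1 (1 + c))).subset (fun x hx ↦ ?_) (convex_Ici 0)).congr fun x _ ↦ ?_
  · have : 0 ≤ c * x := mul_nonneg hc hx
    simp only [mem_preimage, AffineMap.lineMap_apply_ring', mem_Ioi]
    linarith
  · simp only [Function.comp_apply, AffineMap.lineMap_apply_ring']
    ring_nf

theorem mul_log_one_add_mul_le {c β x : ℝ} (hc : 0 ≤ c) (hx : 0 ≤ x) (hxβ : x ≤ β) :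
    x * log (1 + c * β) ≤ β * log (1 + c * x) :=
  (concaveOn_log_one_add_mul hc).mul_le_mul_of_map_zero_nonneg self_mem_Ici (by simp)
    (hx.trans hxβ) hx hxβ

namespace Matrix

variable {n : Type*} [Fintype n] [DecidableEq n]

theorem IsHermitian.det_one_add_smul {𝕜 : Type*} [RCLike 𝕜] {A : Matrix n n 𝕜}
    (hA : A.IsHermitian) (c : ℝ) :
    (1 + c • A).det = ∏ i, ((1 + c * hA.eigenvalues i : ℝ) : 𝕜) := by
  set U : Matrix n n 𝕜 := ↑hA.eigenvectorUnitary
  have hdiag : diagonal (fun i ↦ ((1 + c * hA.eigenvalues i : ℝ) : 𝕜)) =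
      1 + c • diagonal (RCLike.ofReal ∘ hA.eigenvalues) := by
    ext i j
    by_cases h : i = j <;> simp [h, RCLike.real_smul_eq_coe_mul]
  have hconj :
      1 + c • A = U * diagonal (fun i ↦ ((1 + c * hA.eigenvalues i : ℝ) : 𝕜)) * star U := by
    conv_lhs => rw [hA.spectral_theorem, Unitary.conjStarAlgAut_apply]
    rw [hdiag, Matrix.mul_add, Matrix.add_mul, Matrix.mul_one,
      Unitary.mul_star_self_of_mem hA.eigenvectorUnitary.2, Matrix.mul_smul, Matrix.smul_mul]
  rw [hconj, det_conj_of_mul_eq_one (Unitary.coe_mul_star_self _) (Unitary.coe_star_mul_self _),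
    det_diagonal]

theorem PosSemidef.log_det_one_add_smul {A : Matrix n n ℝ} (hA : A.PosSemidef) {c : ℝ}
    (hc : 0 ≤ c) :
    log (1 + c • A).det = ∑ i, log (1 + c * hA.1.eigenvalues i) := by
  rw [hA.1.det_one_add_smul, log_prod fun i _ ↦ ?_]
  · rfl
  have := hA.eigenvalues_nonneg i
  positivity

end Matrix

/-- Lemma 7: for a positive semidefinite `L×L` matrix `A` whose eigenvalues are all at
most `β` (i.e. spectral norm `‖A‖₂ ≤ β`), and `σ > 0`,
`tr(A) ≤ (β / log(1 + β·σ⁻²)) · log det(I + σ⁻²A)`. -/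
theorem statement_12
    (L : ℕ) (A : Matrix (Fin L) (Fin L) ℝ)
    (hA : A.PosSemidef)
    (β : ℝ) (hβpos : 0 < β)
    (hβ : ∀ i : Fin L, hA.1.eigenvalues i ≤ β)
    (σ : ℝ) (hσ : 0 < σ) :
    A.trace ≤ (β / Real.log (1 + β * (σ ^ 2)⁻¹)) *
      Real.log ((1 + (σ ^ 2)⁻¹ • A).det) := by
  set c := (σ ^ 2)⁻¹
  have hc : 0 < c := by positivity
  have hlog : 0 < log (1 + c * β) := log_pos (lt_add_of_pos_right 1 (mul_pos hc hβpos))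
  rw [hA.1.trace_eq_sum_eigenvalues, hA.log_det_one_add_smul hc.le, mul_comm β c,
    div_mul_eq_mul_div, le_div_iff₀ hlog, Finset.sum_mul, Finset.mul_sum]
  exact Finset.sum_le_sum fun i _ ↦
    mul_log_one_add_mul_le hc.le (hA.eigenvalues_nonneg i) (hβ i)
end

section
/- Let σ > 0, let x₁, …, x_t ∈ X be pairwise distinct, let h(x) = ⟨w_h, ψ(x)⟩ for some w_h ∈ H′, let g : X → ℝ satisfy |g(x)| ≤ G·σ for all x ∈ X with G ≥ 0, and set f = h − g. Then for every x ∈ X with x ∉ {x₁,…,x_t}, |m̂_t(x) − f(x)| ≤ ‖w_h‖·σ̂_t(x) + (‖w_h‖ + G)·σ, where m̂_t(x) = k_t(x)ᵀ (K_t + σ²I)⁻¹ (h(x₁),…,h(x_t))ᵀ, σ̂_t²(x) = k(x,x) − k_t(x)ᵀ (K_t + σ²I)⁻¹ k_t(x), and σ̂_t(x) = √(σ̂_t²(x)). -/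
/-!
Under the hypothesis on the kernels, `K_t + σ²I` is the Gram matrix of `ψ(x₁), …, ψ(x_t)` and,
since `x` differs from every `xᵢ`, `k_t(x) = (⟪ψ x, ψ xᵢ⟫)ᵢ`. Hence `m̂_t(x) = ⟪w_h, p⟫`, where `p`
is the orthogonal projection of `ψ x` onto the span of the `ψ xᵢ`, and `σ̂_t²(x) + σ² = ‖p - ψ x‖²`
is its squared residual. So `m̂_t(x) - f(x) = ⟪w_h, p - ψ x⟫ + g(x)`, and Cauchy–Schwarz together
with `√(σ̂_t²(x) + σ²) ≤ σ̂_t(x) + σ` gives the bound.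
-/

open scoped RealInnerProductSpace
open Matrix

noncomputable section

variable {X : Type*} {H : Type*} {H' : Type*}
  [NormedAddCommGroup H] [InnerProductSpace ℝ H]
  [NormedAddCommGroup H'] [InnerProductSpace ℝ H']

/-- Regularized mean prediction `m̂_t(a) = k_t(a)ᵀ (K_t + σ²I)⁻¹ (h(x₁),…,h(x_t))ᵀ`. -/
def rmeanFn (σ : ℝ) (φ : X → H) (hfun : X → ℝ) {t : ℕ} (xs : Fin t → X) (a : X) : ℝ :=
  kvec φ xs a ⬝ᵥ ((gram φ xs + σ ^ 2 • 1)⁻¹ *ᵥ (fun i => hfun (xs i)))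

/-- Regularized variance `σ̂_t²(a) = k(a,a) − k_t(a)ᵀ (K_t + σ²I)⁻¹ k_t(a)`. -/
def rvarFn (σ : ℝ) (φ : X → H) {t : ℕ} (xs : Fin t → X) (a : X) : ℝ :=
  ker φ a a - kvec φ xs a ⬝ᵥ ((gram φ xs + σ ^ 2 • 1)⁻¹ *ᵥ kvec φ xs a)

/-- `σ̂_t(a) = √(σ̂_t²(a))`. -/
def rsigmaFn (σ : ℝ) (φ : X → H) {t : ℕ} (xs : Fin t → X) (a : X) : ℝ :=
  Real.sqrt (rvarFn σ φ xs a)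

namespace Matrix

variable {ι E : Type*} [Fintype ι] [DecidableEq ι]
  [NormedAddCommGroup E] [InnerProductSpace ℝ E]

omit [DecidableEq ι] in
lemma dotProduct_mulVec_comm_of_isHermitian {M : Matrix ι ι ℝ} (hM : M.IsHermitian)
    (b w : ι → ℝ) : b ⬝ᵥ (M *ᵥ w) = (M *ᵥ b) ⬝ᵥ w := by
  rw [dotProduct_mulVec, ← mulVec_transpose, ← conjTranspose_eq_transpose_of_trivial, hM]

/-- When `v` is linearly independent, this is the orthogonal projection of `y` onto the span
of `v`, with coefficients obtained by solving the normal equations. -/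
def gramProjection (v : ι → E) (y : E) : E :=
  ∑ i, ((gram ℝ v)⁻¹ *ᵥ fun i => ⟪y, v i⟫) i • v i

lemma dotProduct_inv_gram_mulVec_inner (v : ι → E) (y w : E) :
    (fun i => ⟪y, v i⟫) ⬝ᵥ ((gram ℝ v)⁻¹ *ᵥ fun i => ⟪w, v i⟫) = ⟪w, gramProjection v y⟫ := by
  rw [dotProduct_mulVec_comm_of_isHermitian (isHermitian_gram ℝ v).inv, gramProjection,
    inner_sum]
  simp only [dotProduct, real_inner_smul_right]

lemma norm_gramProjection_sub_sq (v : ι → E) (hv : IsUnit (gram ℝ v).det) (y : E) :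
    ‖gramProjection v y - y‖ ^ 2 =
      ‖y‖ ^ 2 - (fun i => ⟪y, v i⟫) ⬝ᵥ ((gram ℝ v)⁻¹ *ᵥ fun i => ⟪y, v i⟫) := by
  set b : ι → ℝ := fun i => ⟪y, v i⟫
  set c := (gram ℝ v)⁻¹ *ᵥ b
  have hnorm_sq : ‖gramProjection v y‖ ^ 2 = c ⬝ᵥ b := by
    have hGc : gram ℝ v *ᵥ c = b := by rw [mulVec_mulVec, mul_nonsing_inv _ hv, one_mulVec]
    show ‖∑ i, c i • v i‖ ^ 2 = c ⬝ᵥ b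
    simpa [hGc] using (star_dotProduct_gram_mulVec (𝕜 := ℝ) v c c).symm
  rw [norm_sub_sq_real, hnorm_sq, real_inner_comm, ← dotProduct_inv_gram_mulVec_inner,
    dotProduct_comm c b]
  ring

end Matrix

lemma Real.sqrt_add_sq_le (x : ℝ) {σ : ℝ} (hσ : 0 ≤ σ) : √(x + σ ^ 2) ≤ √x + σ := by
  rw [Real.sqrt_le_iff]
  refine ⟨by positivity, ?_⟩
  rcases le_or_gt 0 x with hx | hx
  · nlinarith [Real.sq_sqrt hx, Real.sqrt_nonneg x]
  · rw [Real.sqrt_eq_zero_of_nonpos hx.le]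
    linarith

section FeatureMaps

variable {φ : X → H} {σ : ℝ}

lemma isUnit_det_gram_add_smul_one (φ : X → H) {t : ℕ} (xs : Fin t → X) (hσ : σ ≠ 0) :
    IsUnit (_root_.gram φ xs + σ ^ 2 • 1).det := by
  have hK : (_root_.gram φ xs).PosSemidef := Matrix.posSemidef_gram ℝ (φ ∘ xs)
  exact (Matrix.PosDef.posSemidef_add hK
    (Matrix.PosDef.one.smul (by positivity))).det_pos.ne'.isUnit

variable [DecidableEq X] {ψ : X → H'}
  (hker : ∀ a b : X, (⟪ψ a, ψ b⟫ : ℝ) = ⟪φ a, φ b⟫ + σ ^ 2 * (if a = b then 1 else 0))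
include hker

lemma gram_add_smul_one_eq_gram {t : ℕ} {xs : Fin t → X} (hinj : Function.Injective xs) :
    _root_.gram φ xs + σ ^ 2 • 1 = Matrix.gram ℝ (ψ ∘ xs) := by
  ext i j
  simp [_root_.gram, ker, hker, Matrix.one_apply, hinj.eq_iff]

lemma kvec_eq_inner {t : ℕ} (xs : Fin t → X) {a : X} (ha : ∀ i, a ≠ xs i) :
    kvec φ xs a = fun i => ⟪ψ a, ψ (xs i)⟫ := by
  ext i
  simp [kvec, ker, hker, ha i]

lemma ker_self_add_sq (a : X) : ker φ a a + σ ^ 2 = ‖ψ a‖ ^ 2 := by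
  rw [ker, ← real_inner_self_eq_norm_sq, hker]
  simp

variable {t : ℕ} {xs : Fin t → X} (hinj : Function.Injective xs) {a : X} (ha : ∀ i, a ≠ xs i)
include hinj ha

lemma rmeanFn_eq_inner_gramProjection {wh : H'} {hfun : X → ℝ} (hh : ∀ a, hfun a = ⟪wh, ψ a⟫) :
    rmeanFn σ φ hfun xs a = ⟪wh, Matrix.gramProjection (ψ ∘ xs) (ψ a)⟫ := by
  rw [rmeanFn, gram_add_smul_one_eq_gram hker hinj, kvec_eq_inner hker xs ha,
    ← Matrix.dotProduct_inv_gram_mulVec_inner]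
  simp only [hh, Function.comp_apply]

lemma rvarFn_add_sq (hσ : σ ≠ 0) :
    rvarFn σ φ xs a + σ ^ 2 = ‖Matrix.gramProjection (ψ ∘ xs) (ψ a) - ψ a‖ ^ 2 := by
  have hdet := isUnit_det_gram_add_smul_one φ xs hσ
  rw [gram_add_smul_one_eq_gram hker hinj] at hdet
  rw [Matrix.norm_gramProjection_sub_sq _ hdet, rvarFn, gram_add_smul_one_eq_gram hker hinj,
    kvec_eq_inner hker xs ha, ← ker_self_add_sq hker a]
  simp only [Function.comp_apply]
  ring

end FeatureMaps

theorem statement_15_general [DecidableEq X]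
    (φ : X → H) (ψ : X → H')
    (σ : ℝ) (hσ : 0 < σ)
    (hker : ∀ a b : X, (⟪ψ a, ψ b⟫ : ℝ) = ⟪φ a, φ b⟫ + σ ^ 2 * (if a = b then 1 else 0))
    (wh : H') (hfun : X → ℝ) (hh : ∀ a, hfun a = ⟪wh, ψ a⟫)
    (g : X → ℝ) (G : ℝ) (hg : ∀ a : X, |g a| ≤ G * σ)
    (f : X → ℝ) (hfdef : ∀ a, f a = hfun a - g a)
    (t : ℕ) (xs : Fin t → X) (hinj : Function.Injective xs)
    (a : X) (ha : ∀ i : Fin t, a ≠ xs i) :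
    |rmeanFn σ φ hfun xs a - f a| ≤ ‖wh‖ * rsigmaFn σ φ xs a + (‖wh‖ + G) * σ := by
  set p := Matrix.gramProjection (ψ ∘ xs) (ψ a)
  have hmean : rmeanFn σ φ hfun xs a = ⟪wh, p⟫ :=
    rmeanFn_eq_inner_gramProjection hker hinj ha hh
  have hresidual : ‖p - ψ a‖ ≤ rsigmaFn σ φ xs a + σ := by
    rw [← Real.sqrt_sq (norm_nonneg _), ← rvarFn_add_sq hker hinj ha hσ.ne']
    exact Real.sqrt_add_sq_le _ hσ.le
  calc |rmeanFn σ φ hfun xs a - f a| = |⟪wh, p - ψ a⟫ + g a| := by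
        rw [hmean, hfdef, hh, inner_sub_right]; ring_nf
    _ ≤ ‖wh‖ * ‖p - ψ a‖ + G * σ :=
        (abs_add_le _ _).trans (add_le_add (abs_real_inner_le_norm _ _) (hg a))
    _ ≤ ‖wh‖ * (rsigmaFn σ φ xs a + σ) + G * σ := by gcongr
    _ = ‖wh‖ * rsigmaFn σ φ xs a + (‖wh‖ + G) * σ := by ring

/-- Lemma 9 (perturbation setting): for `x` distinct from the queried points,
`|m̂_t(x) − f(x)| ≤ ‖w_h‖·σ̂_t(x) + (‖w_h‖ + G)·σ`. -/
theorem statement_15 [DecidableEq X]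
    (φ : X → H) (ψ : X → H')
    (σ : ℝ) (hσ : 0 < σ)
    (hker : ∀ a b : X, (⟪ψ a, ψ b⟫ : ℝ) = ⟪φ a, φ b⟫ + σ ^ 2 * (if a = b then 1 else 0))
    (wh : H') (hfun : X → ℝ) (hh : ∀ a, hfun a = ⟪wh, ψ a⟫)
    (g : X → ℝ) (G : ℝ) (hG : 0 ≤ G) (hg : ∀ a : X, |g a| ≤ G * σ)
    (f : X → ℝ) (hfdef : ∀ a, f a = hfun a - g a)
    (t : ℕ) (xs : Fin t → X) (hinj : Function.Injective xs)
    (a : X) (ha : ∀ i : Fin t, a ≠ xs i) :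
    |rmeanFn σ φ hfun xs a - f a| ≤ ‖wh‖ * rsigmaFn σ φ xs a + (‖wh‖ + G) * σ :=
  statement_15_general φ ψ σ hσ hker wh hfun hh g G hg f hfdef t xs hinj a ha
end
end
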